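/- The sublattice of (ℤ[x_1,x_2,c_1,c_2]/(c_1²,c_2²))^{S_2} in degree 4 spanned by c_{1,0}², c_{2,1}², c_{1,0}c_{2,1}, c_{2,0}, c_{3,1} (with c_{1,0} = c_1+c_2, c_{2,0} = c_1c_2 - c_1x_1 - c_2x_2, c_{2,1} = 3(c_1+c_2) - (x_1+x_2), c_{3,1} = x_1²+x_2² - (x_1+x_2)(c_1+c_2) + 4c_{2,0}) does not contain c_1c_2 and does not contain x_1x_2. -/

import Mathlib

/-!
Both classes are detected modulo 2. Over `𝔽₂[ε][ε']` (with `ε² = ε'² = 0`), the point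
`c₁ ↦ ε`, `c₂, x₁, x₂ ↦ ε'` and the point `x₁ ↦ ε`, `x₂ ↦ ε'`, `c₁, c₂ ↦ 0` both kill `c₁²`, `c₂²`
and all five generators, but they send `c₁c₂`, respectively `x₁x₂`, to `εε' ≠ 0`. A ring
homomorphism is additive, so its kernel contains the whole `ℤ`-span of the generators.
-/

open MvPolynomial

noncomputable section

abbrev PolyXC := MvPolynomial (Fin 2 ⊕ Fin 2) ℤ

def cSqIdeal : Ideal PolyXC :=
  Ideal.span (Set.range fun i : Fin 2 => (X (Sum.inr i) : PolyXC) ^ 2)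

abbrev TruncPoly := PolyXC ⧸ cSqIdeal

def tmk : PolyXC →+* TruncPoly := Ideal.Quotient.mk cSqIdeal

def x1 : PolyXC := X (Sum.inl 0)
def x2 : PolyXC := X (Sum.inl 1)
def c1 : PolyXC := X (Sum.inr 0)
def c2 : PolyXC := X (Sum.inr 1)

def c10 : PolyXC := c1 + c2
def c20 : PolyXC := c1 * c2 - c1 * x1 - c2 * x2
def c21 : PolyXC := 3 * c10 - (x1 + x2)
def c31 : PolyXC := x1 ^ 2 + x2 ^ 2 - (x1 + x2) * c10 + 4 * c20

theorem notMem_span_int_of_map_eq_zero {M N F : Type*} [AddCommGroup M] [AddCommGroup N]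
    [FunLike F M N] [AddMonoidHomClass F M N] (f : F) {S : Set M} (hS : ∀ y ∈ S, f y = 0)
    {x : M} (hx : f x ≠ 0) : x ∉ Submodule.span ℤ S := fun h =>
  hx (Submodule.span_le (p := LinearMap.ker (f : M →+ N).toIntLinearMap) |>.mpr hS h)

instance DualNumber.charP {R : Type*} [CommRing R] (p : ℕ) [CharP R p] : CharP (DualNumber R) p :=
  charP_of_injective_algebraMap TrivSqZeroExt.inl_injective p

open DualNumber in
theorem DualNumber.eps_mul_algebraMap_eps_ne_zero {R : Type*} [CommRing R] [Nontrivial R] :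
    (ε : DualNumber (DualNumber R)) * algebraMap (DualNumber R) _ ε ≠ 0 := fun h => by
  simpa [TrivSqZeroExt.algebraMap_eq_inl] using
    congrArg (fun x => TrivSqZeroExt.snd (TrivSqZeroExt.snd x)) h

def tautologicalGenerators : Set TruncPoly :=
  {tmk (c10 ^ 2), tmk (c21 ^ 2), tmk (c10 * c21), tmk c20, tmk c31}

section Points

variable {R : Type*} [CommRing R]

def truncLift (v : Fin 2 ⊕ Fin 2 → R) (hv : ∀ i, v (Sum.inr i) ^ 2 = 0) : TruncPoly →+* R :=
  Ideal.Quotient.lift cSqIdeal (aeval v).toRingHom fun _ h =>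
    Ideal.span_le (I := RingHom.ker _) |>.mpr (by rintro _ ⟨i, rfl⟩; simpa using hv i) h

theorem truncLift_tmk (v : Fin 2 ⊕ Fin 2 → R) (hv : ∀ i, v (Sum.inr i) ^ 2 = 0) (p : PolyXC) :
    truncLift v hv (tmk p) = aeval v p :=
  Ideal.Quotient.lift_mk _ _ _

def cPoint {s t : R} (hs : s ^ 2 = 0) (ht : t ^ 2 = 0) : TruncPoly →+* R :=
  truncLift (Sum.elim (fun _ => t) ![s, t]) (Fin.forall_fin_two.mpr ⟨hs, ht⟩)

def xPoint (s t : R) : TruncPoly →+* R :=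
  truncLift (Sum.elim ![s, t] 0) fun _ => by simp

theorem cPoint_c1_mul_c2 {s t : R} (hs : s ^ 2 = 0) (ht : t ^ 2 = 0) :
    cPoint hs ht (tmk (c1 * c2)) = s * t := by
  simp [cPoint, truncLift_tmk, c1, c2]

theorem xPoint_x1_mul_x2 (s t : R) : xPoint s t (tmk (x1 * x2)) = s * t := by
  simp [xPoint, truncLift_tmk, x1, x2]

theorem cPoint_eq_zero_of_mem_tautologicalGenerators [CharP R 2] {s t : R} (hs : s ^ 2 = 0)
    (ht : t ^ 2 = 0) : ∀ y ∈ tautologicalGenerators, cPoint hs ht y = 0 := by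
  simp only [tautologicalGenerators, Set.mem_insert_iff, Set.mem_singleton_iff, forall_eq_or_imp,
    forall_eq, cPoint, truncLift_tmk]
  simp [c10, c21, c20, c31, x1, x2, c1, c2]
  grind

theorem xPoint_eq_zero_of_mem_tautologicalGenerators [CharP R 2] {s t : R} (hs : s ^ 2 = 0)
    (ht : t ^ 2 = 0) : ∀ y ∈ tautologicalGenerators, xPoint s t y = 0 := by
  simp only [tautologicalGenerators, Set.mem_insert_iff, Set.mem_singleton_iff, forall_eq_or_imp,
    forall_eq, xPoint, truncLift_tmk]
  simp [c10, c21, c20, c31, x1, x2, c1, c2]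
  grind

theorem tmk_c1_mul_c2_notMem_span_tautologicalGenerators [CharP R 2] {s t : R}
    (hs : s ^ 2 = 0) (ht : t ^ 2 = 0) (hst : s * t ≠ 0) :
    tmk (c1 * c2) ∉ Submodule.span ℤ tautologicalGenerators :=
  notMem_span_int_of_map_eq_zero (cPoint hs ht)
    (cPoint_eq_zero_of_mem_tautologicalGenerators hs ht) (by rwa [cPoint_c1_mul_c2])

theorem tmk_x1_mul_x2_notMem_span_tautologicalGenerators [CharP R 2] {s t : R}
    (hs : s ^ 2 = 0) (ht : t ^ 2 = 0) (hst : s * t ≠ 0) :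
    tmk (x1 * x2) ∉ Submodule.span ℤ tautologicalGenerators :=
  notMem_span_int_of_map_eq_zero (xPoint s t)
    (xPoint_eq_zero_of_mem_tautologicalGenerators hs ht) (by rwa [xPoint_x1_mul_x2])

end Points

/-- The ℤ-sublattice of `(ℤ[x_1,x_2,c_1,c_2]/(c²))^{S_2}` spanned in degree 4 by
`c_{1,0}²`, `c_{2,1}²`, `c_{1,0}c_{2,1}`, `c_{2,0}`, `c_{3,1}` contains neither
`c_1c_2` nor `x_1x_2`. -/
theorem tautological_lattice_misses :
    tmk (c1 * c2) ∉ Submodule.span ℤ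
      ({tmk (c10 ^ 2), tmk (c21 ^ 2), tmk (c10 * c21), tmk c20, tmk c31} : Set TruncPoly) ∧
    tmk (x1 * x2) ∉ Submodule.span ℤ
      ({tmk (c10 ^ 2), tmk (c21 ^ 2), tmk (c10 * c21), tmk c20, tmk c31} : Set TruncPoly) := by
  let s : DualNumber (DualNumber (ZMod 2)) := DualNumber.eps
  let t : DualNumber (DualNumber (ZMod 2)) := algebraMap (DualNumber (ZMod 2)) _ DualNumber.eps
  have hs : s ^ 2 = 0 := DualNumber.eps_pow_two
  have ht : t ^ 2 = 0 := by rw [← map_pow, DualNumber.eps_pow_two, map_zero]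
  have hst : s * t ≠ 0 := DualNumber.eps_mul_algebraMap_eps_ne_zero
  exact ⟨tmk_c1_mul_c2_notMem_span_tautologicalGenerators (s := s) hs ht hst,
    tmk_x1_mul_x2_notMem_span_tautologicalGenerators (s := s) hs ht hst⟩

end
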